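/- If $\frac{r_0 w_V v_2}{r_I(v_1+v_2)} < w_I < \frac{w_V v_2}{v_1+v_2}$ and $r_I > r_0 > 0$, then the optimal value of the linear program is at least $\sum_{i=1}^{n-1}\min\left\{\frac{l_i}{v_2}w_I, \frac{2r_0}{v_1+v_2}w_V\right\} + \frac{2r_0}{v_1+v_2}w_V$. -/

import Mathlib

/-! The lower bound is attained by `D = Y`, where the first helper carries the full cap
`B = 2 r₀ w_V / (v₁ + v₂)` and helper `i + 1` carries `min (l i w_I / v₂) B`. Every window
`k₁, …, k₂` then splits into one term bounded by `B` and terms bounded by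
`min (l i, 2r) · w / v`, which is exactly the shape of both window constraints: for `Y` because
`w_I / v₂ < w_V / (v₁ + v₂)`, and for `D` because `B < 2 r_I w_I / v₂`, which is the lower
bound on `w_I`. -/

/-- Feasibility for the LP: variables `D i`, `Y i` for `i = 1,…,n`, with
inter-vehicle distances `l i` between helper `i` and helper `i+1`. -/
def Feasible (n : ℕ) (l D Y : ℕ → ℝ) (rI r0 v1 v2 wI wV : ℝ) : Prop :=
  (∀ i, 1 ≤ i → i ≤ n → 0 ≤ D i ∧ D i ≤ 2 * rI / v2 * wI) ∧
  (∀ k1 k2, 1 ≤ k1 → k1 ≤ k2 → k2 ≤ n →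
    ∑ i ∈ Finset.Icc k1 k2, D i ≤
      ((∑ i ∈ Finset.Ico k1 k2, min (l i) (2 * rI)) + 2 * rI) / v2 * wI) ∧
  (∀ i, 1 ≤ i → i ≤ n → 0 ≤ Y i ∧ Y i ≤ 2 * r0 / (v1 + v2) * wV) ∧
  (∀ i, 1 ≤ i → i ≤ n → Y i ≤ D i) ∧
  (∀ k1 k2, 1 ≤ k1 → k1 ≤ k2 → k2 ≤ n →
    ∑ i ∈ Finset.Icc k1 k2, Y i ≤
      ((∑ i ∈ Finset.Ico k1 k2, min (l i) (2 * r0)) + 2 * r0) / (v1 + v2) * wV)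

open Finset

theorem Finset.sum_Icc_eq_add_sum_Ico_succ {M : Type*} [AddCommMonoid M] (f : ℕ → M) {a b : ℕ}
    (hab : a ≤ b) : ∑ i ∈ Icc a b, f i = f a + ∑ i ∈ Ico a b, f (i + 1) := by
  rw [← add_sum_Ioc_eq_sum_Icc hab, sum_Ico_add', Ico_add_one_add_one_eq_Ioc]

noncomputable def cappedLoad (l : ℕ → ℝ) (v w B : ℝ) (i : ℕ) : ℝ :=
  if i = 1 then B else min (l (i - 1) / v * w) B

section cappedLoad

variable {l : ℕ → ℝ} {v w B : ℝ}

@[simp]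
theorem cappedLoad_one : cappedLoad l v w B 1 = B := if_pos rfl

theorem cappedLoad_succ {i : ℕ} (hi : 1 ≤ i) :
    cappedLoad l v w B (i + 1) = min (l i / v * w) B := by
  rw [cappedLoad, if_neg (by omega), Nat.add_sub_cancel]

theorem cappedLoad_le (i : ℕ) : cappedLoad l v w B i ≤ B := by
  unfold cappedLoad
  split_ifs
  exacts [le_rfl, min_le_right _ _]

theorem cappedLoad_nonneg (hl : ∀ i, 0 ≤ l i) (hv : 0 ≤ v) (hw : 0 ≤ w) (hB : 0 ≤ B) (i : ℕ) :
    0 ≤ cappedLoad l v w B i := by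
  unfold cappedLoad
  split_ifs
  exacts [hB, le_min (by have := hl (i - 1); positivity) hB]

theorem min_div_mul_le_min_div_mul {x r v' w' : ℝ} (hx : 0 ≤ x) (hB : B ≤ 2 * r / v' * w')
    (hrate : w / v ≤ w' / v') : min (x / v * w) B ≤ min x (2 * r) / v' * w' := by
  rcases le_total x (2 * r) with h | h
  · rw [min_eq_left h, div_mul_comm, div_mul_comm x]
    exact (min_le_left _ _).trans (mul_le_mul_of_nonneg_right hrate hx)
  · rw [min_eq_right h]
    exact (min_le_right _ _).trans hB

theorem sum_Icc_cappedLoad_le {r v' w' : ℝ} (hl : ∀ i, 0 ≤ l i) (hB : B ≤ 2 * r / v' * w')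
    (hrate : w / v ≤ w' / v') {k₁ k₂ : ℕ} (hk₁ : 1 ≤ k₁) (hk : k₁ ≤ k₂) :
    ∑ i ∈ Icc k₁ k₂, cappedLoad l v w B i ≤
      ((∑ i ∈ Ico k₁ k₂, min (l i) (2 * r)) + 2 * r) / v' * w' := by
  rw [sum_Icc_eq_add_sum_Ico_succ _ hk, add_div, add_mul, sum_div, sum_mul, add_comm]
  refine add_le_add (sum_le_sum fun i hi => ?_) ((cappedLoad_le k₁).trans hB)
  rw [cappedLoad_succ (hk₁.trans (mem_Ico.mp hi).1)]
  exact min_div_mul_le_min_div_mul (hl i) hB hrate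

theorem sum_Icc_one_cappedLoad {n : ℕ} (hn : 1 ≤ n) :
    ∑ i ∈ Icc 1 n, cappedLoad l v w B i = (∑ i ∈ Ico 1 n, min (l i / v * w) B) + B := by
  rw [sum_Icc_eq_add_sum_Ico_succ _ hn, cappedLoad_one, add_comm]
  exact congrArg (· + B) (sum_congr rfl fun i hi => cappedLoad_succ (mem_Ico.mp hi).1)

end cappedLoad

theorem stmt7_general (n : ℕ) (hn : 1 ≤ n) (rI r0 v1 v2 wI wV : ℝ)
    (hr0 : 0 < r0) (hrIr0 : r0 < rI) (hv1 : 0 < v1) (hv2 : 0 < v2)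
    (hwV : 0 < wV)
    (hlo : r0 * wV * v2 / (rI * (v1 + v2)) < wI)
    (hhi : wI < wV * v2 / (v1 + v2))
    (l : ℕ → ℝ) (hl : ∀ i, 0 ≤ l i) :
    ∃ D Y : ℕ → ℝ, Feasible n l D Y rI r0 v1 v2 wI wV ∧
      (∑ i ∈ Finset.Ico 1 n, min (l i / v2 * wI) (2 * r0 / (v1 + v2) * wV)) +
        2 * r0 / (v1 + v2) * wV ≤ ∑ i ∈ Finset.Icc 1 n, Y i := by
  have hrI : 0 < rI := hr0.trans hrIr0
  have hwI : 0 < wI := lt_of_le_of_lt (by positivity) hlo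
  set B := 2 * r0 / (v1 + v2) * wV with hB
  have hBI : B ≤ 2 * rI / v2 * wI :=
    calc B = 2 * rI / v2 * (r0 * wV * v2 / (rI * (v1 + v2))) := by rw [hB]; field_simp
      _ ≤ 2 * rI / v2 * wI := by gcongr
  have hrate : wI / v2 ≤ wV / (v1 + v2) := by
    rw [div_le_iff₀ hv2, div_mul_eq_mul_div]
    exact hhi.le
  set Y := cappedLoad l v2 wI B
  have hY₀ : ∀ i, 0 ≤ Y i := cappedLoad_nonneg hl hv2.le hwI.le (by positivity)
  refine ⟨Y, Y, ⟨fun i _ _ => ⟨hY₀ i, (cappedLoad_le i).trans hBI⟩,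
    fun _ _ hk₁ hk _ => sum_Icc_cappedLoad_le hl hBI le_rfl hk₁ hk,
    fun i _ _ => ⟨hY₀ i, cappedLoad_le i⟩, fun _ _ _ => le_rfl,
    fun _ _ hk₁ hk _ => sum_Icc_cappedLoad_le hl le_rfl hrate hk₁ hk⟩, ?_⟩
  exact (sum_Icc_one_cappedLoad hn).ge

theorem stmt7 (n : ℕ) (hn : 1 ≤ n) (rI r0 v1 v2 wI wV : ℝ)
    (hr0 : 0 < r0) (hrIr0 : r0 < rI) (hv1 : 0 < v1) (hv2 : 0 < v2)
    (hwV : 0 < wV) (hwI : 0 < wI)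
    (hlo : r0 * wV * v2 / (rI * (v1 + v2)) < wI)
    (hhi : wI < wV * v2 / (v1 + v2))
    (l : ℕ → ℝ) (hl : ∀ i, 0 ≤ l i) :
    ∃ D Y : ℕ → ℝ, Feasible n l D Y rI r0 v1 v2 wI wV ∧
      (∑ i ∈ Finset.Ico 1 n, min (l i / v2 * wI) (2 * r0 / (v1 + v2) * wV)) +
        2 * r0 / (v1 + v2) * wV ≤ ∑ i ∈ Finset.Icc 1 n, Y i :=
  stmt7_general n hn rI r0 v1 v2 wI wV hr0 hrIr0 hv1 hv2 hwV hlo hhi l hl
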